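/- For n ≥ k ≥ 0, the degenerate Stirling polynomial satisfies S_{2,λ}(n,k|x) = ∑_{m=0}^n (1/k!) (Δ^k x^m) λ^{n-m} S_1(n,m), where Δ^k x^m = ∑_{l=0}^k C(k,l)(-1)^{k-l}(x+l)^m and S_1(n,m) is the (signed) Stirling number of the first kind. -/
import Mathlib


open Finset

/-- Signed Stirling numbers of the first kind: `(x)_n = ∑_m S_1(n,m) x^m`. -/
def S1 : ℕ → ℕ → ℤ
  | 0, 0 => 1
  | 0, _ + 1 => 0
  | n + 1, 0 => -(n : ℤ) * S1 n 0
  | n + 1, k + 1 => S1 n k - (n : ℤ) * S1 n (k + 1)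

/-- The λ-binomial coefficient `binom_λ(y,n) = y(y-λ)⋯(y-(n-1)λ)/n!`. -/
noncomputable def dbinom (lam y : ℝ) (n : ℕ) : ℝ :=
  (∏ i ∈ range n, (y - i * lam)) / n.factorial

/-- Degenerate Stirling polynomials of the second kind:
`S_{2,λ}(n,k|x) = (n!/k!) ∑_{l=0}^k C(k,l)(-1)^{k-l} binom_λ(l+x,n)`. -/
noncomputable def S2deg (lam : ℝ) (n k : ℕ) (x : ℝ) : ℝ :=
  (n.factorial : ℝ) / (k.factorial : ℝ) *
    ∑ l ∈ range (k + 1), (k.choose l : ℝ) * (-1) ^ (k - l) * dbinom lam (l + x) n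

lemma S1_gt : ∀ n m : ℕ, n < m → S1 n m = 0 := by
  intro n
  induction n with
  | zero => intro m hm; match m, hm with
    | m + 1, _ => rfl
  | succ n ih =>
    intro m hm
    match m, hm with
    | m + 1, hm =>
      have h1 : n < m := Nat.lt_of_succ_lt_succ hm
      rw [S1, ih m h1, ih (m+1) (Nat.lt_succ_of_lt h1)]
      ring

lemma prod_eq_sum (lam y : ℝ) (n : ℕ) :
    ∏ i ∈ range n, (y - i * lam) =
      ∑ m ∈ range (n + 1), (S1 n m : ℝ) * y ^ m * lam ^ (n - m) := by
  induction n with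
  | zero => simp [S1]
  | succ n ih =>
    rw [prod_range_succ, ih, Finset.sum_range_succ' _ (n + 1)]
    have key : ∀ m ∈ range (n + 1),
        ((S1 (n+1) (m+1) : ℝ)) * y ^ (m+1) * lam ^ (n + 1 - (m+1)) =
        (S1 n m : ℝ) * y ^ (m+1) * lam ^ (n - m)
          - (n : ℝ) * ((S1 n (m+1) : ℝ) * y ^ (m+1) * lam ^ (n - m)) := by
      intro m _
      rw [show S1 (n+1) (m+1) = S1 n m - (n:ℤ) * S1 n (m+1) from rfl]
      push_cast
      ring
    have h0 : (S1 (n+1) 0 : ℝ) = -(n : ℝ) * (S1 n 0 : ℝ) := by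
      rw [show S1 (n+1) 0 = -(n:ℤ) * S1 n 0 from rfl]; push_cast; ring
    have e1 : ∑ m ∈ range (n + 1), (S1 n m : ℝ) * y ^ (m+1) * lam ^ (n - m)
        = (∑ m ∈ range (n + 1), (S1 n m : ℝ) * y ^ m * lam ^ (n - m)) * y := by
      rw [Finset.sum_mul]; apply Finset.sum_congr rfl; intro m _; ring
    have e3 : (∑ m ∈ range (n + 1), (S1 n m : ℝ) * y ^ m * lam ^ (n - m)) * ((n : ℝ) * lam)
        = ∑ m ∈ range (n + 1), (n : ℝ) * ((S1 n (m+1) : ℝ) * y ^ (m+1) * lam ^ (n - m))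
          + (n : ℝ) * (S1 n 0 : ℝ) * lam ^ (n + 1) := by
      rw [Finset.sum_mul, Finset.sum_range_succ' (fun m => (S1 n m : ℝ) * y ^ m * lam ^ (n - m) * ((n:ℝ) * lam)) n]
      rw [Finset.sum_range_succ (fun m => (n : ℝ) * ((S1 n (m+1) : ℝ) * y ^ (m+1) * lam ^ (n - m)))]
      rw [S1_gt n (n+1) (Nat.lt_succ_self n)]
      have hc : ∀ m ∈ range n,
          (S1 n (m+1) : ℝ) * y ^ (m+1) * lam ^ (n - (m+1)) * ((n:ℝ) * lam)
          = (n : ℝ) * ((S1 n (m+1) : ℝ) * y ^ (m+1) * lam ^ (n - m)) := by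
        intro m hm
        rw [Finset.mem_range] at hm
        have h : n - m = (n - (m+1)) + 1 := by omega
        rw [h]; ring
      rw [Finset.sum_congr rfl hc]
      simp only [pow_zero, Nat.sub_zero, Nat.sub_self, Int.cast_zero]
      ring
    rw [Finset.sum_congr rfl key, Finset.sum_sub_distrib, e1, h0]
    simp only [Nat.sub_zero, pow_zero]
    linear_combination -e3

/-- For `n ≥ k`:
`S_{2,λ}(n,k|x) = ∑_{m=0}^n (1/k!)(Δ^k x^m) λ^{n-m} S_1(n,m)`, where
`Δ^k x^m = ∑_{l=0}^k C(k,l)(-1)^{k-l}(x+l)^m`. -/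
theorem stmt5 (lam x : ℝ) (n k : ℕ) (hkn : k ≤ n) :
    S2deg lam n k x =
      ∑ m ∈ range (n + 1),
        (1 / (k.factorial : ℝ)) *
          (∑ l ∈ range (k + 1), (k.choose l : ℝ) * (-1) ^ (k - l) * (x + l) ^ m) *
          lam ^ (n - m) * (S1 n m : ℝ) := by
  have hn : (n.factorial : ℝ) ≠ 0 := Nat.cast_ne_zero.mpr n.factorial_ne_zero
  calc S2deg lam n k x
      = ∑ l ∈ range (k + 1), ∑ m ∈ range (n + 1),
          (k.choose l : ℝ) * (-1) ^ (k - l) * (x + l) ^ m * lam ^ (n - m)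
            * (S1 n m : ℝ) / k.factorial := by
        rw [S2deg, Finset.mul_sum]
        apply Finset.sum_congr rfl
        intro l _
        rw [dbinom, prod_eq_sum, Finset.sum_div, Finset.mul_sum, Finset.mul_sum]
        apply Finset.sum_congr rfl
        intro m _
        rw [add_comm (l:ℝ) x]
        field_simp
    _ = _ := by
        rw [Finset.sum_comm]
        apply Finset.sum_congr rfl
        intro m _
        rw [Finset.mul_sum, Finset.sum_mul, Finset.sum_mul]
        apply Finset.sum_congr rfl
        intro l _
        ring
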